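/- Let p be a prime and A an infinite abelian torsion p-group (every element has p-power order) such that the subgroup {a ∈ A : p·a = 0} is finite. Then A possesses a subgroup isomorphic to the Prüfer p-group ℤ(p^∞), i.e., to the p-primary component of ℚ/ℤ. -/

import Mathlib

/-!
Call `x` of infinite height if it lies in `p ^ n • A` for every `n`. Because `A[p]` is finite, so
is every fibre of `a ↦ p • a`, and a König-type argument applies twice. First, if no nonzero
element of `A[p]` had infinite height, some `p ^ N • A` would meet `A[p]` only in `0`, forcing
`p ^ N • A = 0`, i.e. `A = A[p ^ N]`, which is finite. Second, an element of infinite height has a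
`p`-th "root" of infinite height. Iterating from a nonzero element of `A[p]` of infinite height
gives `c₀, c₁, …` with `p • c₀ = 0 ≠ c₀` and `p • cₙ₊₁ = cₙ`, exactly like the generators
`1 / p ^ (n + 1)` of `ℤ(p^∞)`. Since `cₙ` has order `p ^ (n + 1)`, the subgroups generated by two
such chains are quotients of the free group on `ℕ` by the same kernel.
-/

noncomputable section
namespace ValPaper

/-- The group `ℚ/ℤ`. -/
abbrev QmodZ : Type := ℚ ⧸ AddSubgroup.zmultiples (1 : ℚ)

/-- The Prüfer `p`-group `ℤ(p^∞)`: the `p`-primary component of `ℚ/ℤ`, i.e. the subgroup of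
all elements of `p`-power order. -/
def pruferGroup (p : ℕ) : AddSubgroup QmodZ :=
  AddSubgroup.closure { x : QmodZ | ∃ n : ℕ, (p ^ n : ℕ) • x = 0 }

structure IsPruferChain {G : Type*} [AddCommGroup G] (p : ℕ) (d : ℕ → G) : Prop where
  ne_zero : d 0 ≠ 0
  nsmul_zero : p • d 0 = 0
  nsmul_succ (n : ℕ) : p • d (n + 1) = d n

namespace IsPruferChain

variable {G H : Type*} [AddCommGroup G] [AddCommGroup H] {p : ℕ} {d : ℕ → G} {e : ℕ → H}

theorem pow_nsmul_add (hd : IsPruferChain p d) (n j : ℕ) : p ^ j • d (n + j) = d n := by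
  induction j with
  | zero => simp
  | succ j ih => rw [pow_succ, mul_smul, ← add_assoc, hd.nsmul_succ, ih]

theorem zsmul_eq_of_le (hd : IsPruferChain p d) {n N : ℕ} (h : n ≤ N) (k : ℤ) :
    k • d n = (k * p ^ (N - n)) • d N := by
  obtain ⟨j, rfl⟩ := Nat.exists_eq_add_of_le h
  rw [Nat.add_sub_cancel_left, mul_smul, ← hd.pow_nsmul_add n j]
  norm_cast

theorem addOrderOf_eq (hd : IsPruferChain p d) (hp : p.Prime) (n : ℕ) :
    addOrderOf (d n) = p ^ (n + 1) := by
  have := Fact.mk hp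
  have h := hd.pow_nsmul_add 0 n
  rw [zero_add] at h
  apply addOrderOf_eq_prime_pow
  · rw [h]
    exact hd.ne_zero
  · rw [pow_succ', mul_smul, h, hd.nsmul_zero]

theorem exists_lift_eq_zsmul (hd : IsPruferChain p d) (he : IsPruferChain p e)
    (x : FreeAddGroup ℕ) :
    ∃ N : ℕ, ∃ k : ℤ, FreeAddGroup.lift d x = k • d N ∧ FreeAddGroup.lift e x = k • e N := by
  induction x using FreeAddGroup.induction_on with
  | C1 => exact ⟨0, 0, by simp, by simp⟩
  | of n => exact ⟨n, 1, by simp, by simp⟩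
  | neg_of n ih =>
    obtain ⟨N, k, hdx, hex⟩ := ih
    exact ⟨N, -k, by rw [map_neg, hdx, neg_smul], by rw [map_neg, hex, neg_smul]⟩
  | add x y ihx ihy =>
    obtain ⟨N, k, hdx, hex⟩ := ihx
    obtain ⟨M, l, hdy, hey⟩ := ihy
    refine ⟨max N M, k * p ^ (max N M - N) + l * p ^ (max N M - M), ?_, ?_⟩
    · rw [map_add, hdx, hdy, add_smul, ← hd.zsmul_eq_of_le (le_max_left N M),
        ← hd.zsmul_eq_of_le (le_max_right N M)]
    · rw [map_add, hex, hey, add_smul, ← he.zsmul_eq_of_le (le_max_left N M),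
        ← he.zsmul_eq_of_le (le_max_right N M)]

theorem ker_lift_eq (hp : p.Prime) (hd : IsPruferChain p d) (he : IsPruferChain p e) :
    (FreeAddGroup.lift d).ker = (FreeAddGroup.lift e).ker := by
  ext x
  obtain ⟨N, k, hdx, hex⟩ := exists_lift_eq_zsmul hd he x
  rw [AddMonoidHom.mem_ker, AddMonoidHom.mem_ker, hdx, hex,
    ← addOrderOf_dvd_iff_zsmul_eq_zero, ← addOrderOf_dvd_iff_zsmul_eq_zero,
    hd.addOrderOf_eq hp, he.addOrderOf_eq hp]

theorem nonempty_addEquiv_closure_range (hp : p.Prime) (hd : IsPruferChain p d)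
    (he : IsPruferChain p e) :
    Nonempty (AddSubgroup.closure (Set.range d) ≃+ AddSubgroup.closure (Set.range e)) := by
  rw [← FreeAddGroup.range_lift_eq_closure, ← FreeAddGroup.range_lift_eq_closure]
  exact ⟨(QuotientAddGroup.quotientKerEquivRange _).symm.trans
    ((QuotientAddGroup.quotientAddEquivOfEq (ker_lift_eq hp hd he)).trans
      (QuotientAddGroup.quotientKerEquivRange _))⟩

end IsPruferChain

def pruferGen (p n : ℕ) : QmodZ := ((p ^ (n + 1) : ℚ)⁻¹ : ℚ)

theorem isPruferChain_pruferGen {p : ℕ} (hp : p.Prime) : IsPruferChain p (pruferGen p) where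
  ne_zero := by
    have h1 : (1 : ℚ) < p := by exact_mod_cast hp.one_lt
    rw [pruferGen, Ne, QuotientAddGroup.eq_zero_iff, AddSubgroup.mem_zmultiples_iff]
    rintro ⟨k, hk⟩
    rw [zsmul_one, pow_one] at hk
    have hpos : (0 : ℚ) < k := hk ▸ inv_pos.mpr (by positivity)
    have hlt : (k : ℚ) < 1 := hk ▸ inv_lt_one_of_one_lt₀ h1
    norm_cast at hpos hlt
    omega
  nsmul_zero := by
    have : (p : ℚ) ≠ 0 := by exact_mod_cast hp.ne_zero
    rw [pruferGen, ← QuotientAddGroup.mk_nsmul, nsmul_eq_mul, pow_one, mul_inv_cancel₀ this]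
    exact (QuotientAddGroup.eq_zero_iff _).mpr (AddSubgroup.mem_zmultiples 1)
  nsmul_succ n := by
    have : (p : ℚ) ≠ 0 := by exact_mod_cast hp.ne_zero
    rw [pruferGen, pruferGen, ← QuotientAddGroup.mk_nsmul, nsmul_eq_mul]
    congr 1
    field_simp
    ring

theorem pruferGroup_eq_closure_range_pruferGen {p : ℕ} (hp : p.Prime) :
    pruferGroup p = AddSubgroup.closure (Set.range (pruferGen p)) := by
  have : (p : ℚ) ≠ 0 := by exact_mod_cast hp.ne_zero
  apply le_antisymm
  · rw [pruferGroup, AddSubgroup.closure_le]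
    rintro x ⟨n, hx⟩
    obtain ⟨r, rfl⟩ := QuotientAddGroup.mk_surjective x
    rw [← QuotientAddGroup.mk_nsmul, QuotientAddGroup.eq_zero_iff,
      AddSubgroup.mem_zmultiples_iff] at hx
    obtain ⟨k, hk⟩ := hx
    have hr : (QuotientAddGroup.mk r : QmodZ) = (k * p) • pruferGen p n := by
      rw [pruferGen, ← QuotientAddGroup.mk_zsmul]
      congr 1
      rw [nsmul_eq_mul, zsmul_one] at hk
      rw [zsmul_eq_mul]
      push_cast at hk ⊢
      field_simp
      rw [hk]
      ring
    rw [hr]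
    exact AddSubgroup.zsmul_mem _ (AddSubgroup.subset_closure (Set.mem_range_self n)) _
  · rw [AddSubgroup.closure_le]
    rintro _ ⟨n, rfl⟩
    have hord := (isPruferChain_pruferGen hp).addOrderOf_eq hp n
    refine AddSubgroup.subset_closure (show ∃ m : ℕ, (p ^ m : ℕ) • pruferGen p n = 0 from ?_)
    exact ⟨n + 1, hord ▸ addOrderOf_nsmul_eq_zero _⟩

theorem nonempty_inter_iInter_of_antitone {α : Type*} {F : Set α} (hF : F.Finite)
    {s : ℕ → Set α} (hs : Antitone s) (h : ∀ n, (F ∩ s n).Nonempty) :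
    (F ∩ ⋂ n, s n).Nonempty := by
  by_contra hempty
  have hescape : ∀ y ∈ F, ∃ n, y ∉ s n := fun y hy => by
    by_contra! hall
    exact hempty ⟨y, hy, Set.mem_iInter.mpr hall⟩
  choose! N hN using hescape
  obtain ⟨M, hM⟩ := (hF.image N).bddAbove
  obtain ⟨y, hyF, hy⟩ := h M
  exact hN y hyF (hs (hM ⟨y, hyF, rfl⟩) hy)

section TorsionGroup

variable {A : Type*} [AddCommGroup A] {p : ℕ}

def infiniteHeight (p : ℕ) (A : Type*) [AddCommGroup A] : Set A :=
  ⋂ n : ℕ, Set.range fun b : A => p ^ n • b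

theorem antitone_range_pow_nsmul : Antitone fun n : ℕ => Set.range fun b : A => p ^ n • b := by
  intro n m hnm
  rintro _ ⟨b, rfl⟩
  exact ⟨p ^ (m - n) • b, by simp only [smul_smul, ← pow_add, Nat.add_sub_cancel' hnm]⟩

theorem finite_setOf_nsmul_eq (hfin : {a : A | p • a = 0}.Finite) (b : A) :
    {a : A | p • a = b}.Finite := by
  rcases Set.eq_empty_or_nonempty {a : A | p • a = b} with h | ⟨a₀, ha₀⟩
  · simp [h]
  · refine (hfin.image (a₀ + ·)).subset fun a ha => ⟨a - a₀, ?_, add_sub_cancel a₀ a⟩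
    rw [Set.mem_ofPred_eq] at ha ha₀ ⊢
    rw [smul_sub, ha, ha₀, sub_self]

theorem finite_setOf_pow_nsmul_eq_zero (hfin : {a : A | p • a = 0}.Finite) (n : ℕ) :
    {a : A | p ^ n • a = 0}.Finite := by
  induction n with
  | zero => simp
  | succ n ih =>
    convert ih.preimage' (f := (p • ·)) fun b _ => finite_setOf_nsmul_eq hfin b using 1
    ext a
    simp [pow_succ, mul_smul]

theorem exists_pow_nsmul_ne_zero_and_nsmul_eq_zero (htorsion : ∀ a : A, ∃ n : ℕ, p ^ n • a = 0)
    {x : A} (hx : x ≠ 0) : ∃ m : ℕ, p ^ m • x ≠ 0 ∧ p • p ^ m • x = 0 := by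
  classical
  have hN : Nat.find (htorsion x) ≠ 0 := fun h0 =>
    hx (by simpa [h0] using Nat.find_spec (htorsion x))
  refine ⟨Nat.find (htorsion x) - 1, Nat.find_min (htorsion x) (by omega), ?_⟩
  rw [smul_smul, ← pow_succ', Nat.sub_add_cancel (Nat.one_le_iff_ne_zero.mpr hN)]
  exact Nat.find_spec (htorsion x)

theorem exists_ne_zero_mem_infiniteHeight (htorsion : ∀ a : A, ∃ n : ℕ, p ^ n • a = 0)
    (hinf : Infinite A) (hfin : {a : A | p • a = 0}.Finite) :
    ∃ a ∈ infiniteHeight p A, a ≠ 0 ∧ p • a = 0 := by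
  suffices h : ∀ N, ({a : A | p • a = 0} \ {0} ∩ Set.range fun b : A => p ^ N • b).Nonempty by
    obtain ⟨a, ⟨ha, ha0⟩, haH⟩ :=
      nonempty_inter_iInter_of_antitone hfin.sdiff antitone_range_pow_nsmul h
    exact ⟨a, haH, ha0, ha⟩
  intro N
  by_contra hempty
  have hbounded : ∀ b : A, p ^ N • b = 0 := fun b => by
    by_contra hb
    obtain ⟨m, hm0, hm⟩ := exists_pow_nsmul_ne_zero_and_nsmul_eq_zero htorsion hb
    exact hempty ⟨_, ⟨hm, hm0⟩, p ^ m • b, smul_comm _ _ _⟩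
  exact Set.infinite_univ_iff.mpr hinf
    ((finite_setOf_pow_nsmul_eq_zero hfin N).subset fun b _ => hbounded b)

theorem exists_nsmul_eq_of_mem_infiniteHeight (hfin : {a : A | p • a = 0}.Finite) {x : A}
    (hx : x ∈ infiniteHeight p A) : ∃ y ∈ infiniteHeight p A, p • y = x := by
  obtain ⟨y, hy, hyH⟩ := nonempty_inter_iInter_of_antitone (finite_setOf_nsmul_eq hfin x)
    antitone_range_pow_nsmul fun n => by
      obtain ⟨b, hb⟩ := Set.mem_iInter.mp hx (n + 1)
      exact ⟨p ^ n • b, by rw [Set.mem_ofPred_eq, ← hb, smul_smul, ← pow_succ'], b, rfl⟩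
  exact ⟨y, hyH, hy⟩

theorem exists_isPruferChain (htorsion : ∀ a : A, ∃ n : ℕ, p ^ n • a = 0) (hinf : Infinite A)
    (hfin : {a : A | p • a = 0}.Finite) : ∃ c : ℕ → A, IsPruferChain p c := by
  obtain ⟨a, haH, ha0, hpa⟩ := exists_ne_zero_mem_infiniteHeight htorsion hinf hfin
  choose! root hrootH hroot using fun x (hx : x ∈ infiniteHeight p A) =>
    exists_nsmul_eq_of_mem_infiniteHeight hfin hx
  have hiter : ∀ n, root^[n] a ∈ infiniteHeight p A := fun n => by
    induction n with
    | zero => exact haH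
    | succ n ih => rw [Function.iterate_succ_apply']; exact hrootH _ ih
  refine ⟨fun n => root^[n] a, ha0, hpa, fun n => ?_⟩
  rw [Function.iterate_succ_apply']
  exact hroot _ (hiter n)

end TorsionGroup

/-- An infinite abelian torsion `p`-group whose `p`-torsion subgroup
`{a | p • a = 0}` is finite possesses a subgroup isomorphic to the Prüfer group `ℤ(p^∞)`. -/
theorem statement8 (p : ℕ) (hp : p.Prime) (A : Type) [AddCommGroup A]
    (htorsion : ∀ a : A, ∃ n : ℕ, (p ^ n : ℕ) • a = 0)
    (hinf : Infinite A)
    (hfin : {a : A | p • a = 0}.Finite) :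
    ∃ B : AddSubgroup A, Nonempty (B ≃+ pruferGroup p) := by
  obtain ⟨c, hc⟩ := exists_isPruferChain htorsion hinf hfin
  rw [pruferGroup_eq_closure_range_pruferGen hp]
  exact ⟨_, hc.nonempty_addEquiv_closure_range hp (isPruferChain_pruferGen hp)⟩

end ValPaper
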